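/- The space of weightless reversible squares equals the space of weightless associated vertex-cross-sum matrices: R_n ∩ V_n = A_n ∩ V_n, where R_n is the set of matrices with the row/column reverse property, A_n = {M : M + JMJ = 0} with J the antidiagonal permutation matrix, and V_n is the set of matrices with the vertex cross sum property and total entry sum zero. Consequently A_n = (R_n ∩ V_n) ⊕ (A_n ∩ S_n), with S_n the semimagic matrices. -/

import Mathlib

noncomputable def antidiagJ (n : ℕ) : Matrix (Fin n) (Fin n) ℝ :=
  fun i j => if j = i.rev then 1 else 0

def PropR {n : ℕ} (M : Matrix (Fin n) (Fin n) ℝ) : Prop :=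
  (∀ i j k : Fin n, M i j + M i j.rev = M i k + M i k.rev) ∧
  (∀ i j k : Fin n, M i j + M i.rev j = M k j + M k.rev j)

def PropV {n : ℕ} (M : Matrix (Fin n) (Fin n) ℝ) : Prop :=
  (∀ i j k l : Fin n, M i j + M k l = M i l + M k j) ∧ ∑ i, ∑ j, M i j = 0

def PropA {n : ℕ} (M : Matrix (Fin n) (Fin n) ℝ) : Prop :=
  antidiagJ n * M * antidiagJ n = -M

def PropS {n : ℕ} (M : Matrix (Fin n) (Fin n) ℝ) : Prop :=
  ∃ w : ℝ, (∀ i, ∑ j, M i j = n * w) ∧ (∀ i, ∑ j, M j i = n * w)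


/-!
Entrywise, `J M J` is `(i, j) ↦ M i.rev j.rev`. The vertex cross sum property says that
`M i j = r i + c j`, so together with the reverse property it makes `M i j + M i.rev j.rev`
constant; summing over all entries shows that this constant vanishes, because the total sum does.
The converse is a direct computation. A semimagic matrix `r i + c j` has constant `r` and `c`, so
it is constant and, having total sum zero, vanishes. An associated `M` is the sum of `r i + c j`,
with `r` and `c` its row and column means (odd under reversal, hence associated with total sum
zero), and a semimagic remainder.
-/

open Finset Matrix

section TorsionFree

variable {G : Type*} [AddCommGroup G] [IsAddTorsionFree G]

theorem Fintype.eq_zero_of_forall_eq_of_sum_eq_zero {ι : Type*} [Fintype ι] {f : ι → G}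
    (hf : ∀ a b, f a = f b) (hs : ∑ a, f a = 0) (a : ι) : f a = 0 := by
  have : Nonempty ι := ⟨a⟩
  have hsum : ∑ b, f b = Fintype.card ι • f a := by simp [hf _ a]
  rwa [hsum, nsmul_eq_zero_iff_right Fintype.card_ne_zero] at hs

theorem Fin.sum_eq_zero_of_apply_rev {n : ℕ} {f : Fin n → G} (hf : ∀ i, f i.rev = -f i) :
    ∑ i, f i = 0 := by
  have h : ∑ i : Fin n, f i.rev = ∑ i, f i := Equiv.sum_comp Fin.revPerm f
  simp only [hf, sum_neg_distrib, neg_eq_iff_add_eq_zero] at h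
  rwa [← two_nsmul, two_nsmul_eq_zero] at h

end TorsionFree

section Matrix

variable {n : ℕ} {M N : Matrix (Fin n) (Fin n) ℝ}

theorem antidiagJ_mul_mul_antidiagJ_apply (M : Matrix (Fin n) (Fin n) ℝ) (i j : Fin n) :
    (antidiagJ n * M * antidiagJ n) i j = M i.rev j.rev := by
  have h : ∀ k : Fin n, j = k.rev ↔ k = j.rev := fun k => eq_comm.trans Fin.rev_eq_iff
  simp [antidiagJ, mul_apply, h]

theorem propA_iff : PropA M ↔ ∀ i j, M i.rev j.rev = -M i j := by
  simp only [PropA, ← Matrix.ext_iff, antidiagJ_mul_mul_antidiagJ_apply, Matrix.neg_apply]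

theorem sum_sum_apply_rev_rev (M : Matrix (Fin n) (Fin n) ℝ) :
    ∑ i : Fin n, ∑ j : Fin n, M i.rev j.rev = ∑ i, ∑ j, M i j :=
  (Equiv.sum_comp Fin.revPerm fun i => ∑ j : Fin n, M i j.rev).trans <|
    sum_congr rfl fun i _ => Equiv.sum_comp Fin.revPerm (M i)

theorem PropA.sub (hM : PropA M) (hN : PropA N) : PropA (M - N) := by
  rw [PropA, mul_sub, sub_mul, hM, hN, neg_sub_neg, neg_sub]

theorem PropA.transpose (hM : PropA M) : PropA Mᵀ :=
  propA_iff.2 fun i j => propA_iff.1 hM j i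

theorem PropA.sum_apply_rev (hM : PropA M) (i : Fin n) : ∑ j, M i.rev j = -∑ j, M i j := by
  rw [← Equiv.sum_comp Fin.revPerm (M i.rev)]
  simp [propA_iff.1 hM]

theorem PropV.transpose (hM : PropV M) : PropV Mᵀ :=
  ⟨fun i j k l => by simpa [add_comm] using hM.1 j i l k, sum_comm.trans hM.2⟩

theorem PropA.propR (hA : PropA M) (hV : PropV M) : PropR M := by
  rw [propA_iff] at hA
  refine ⟨fun i j k => ?_, fun i j k => ?_⟩
  · linarith [hV.1 i j.rev i.rev k.rev, hA i j, hA i k]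
  · linarith [hV.1 i.rev j k.rev j.rev, hA i j, hA k j]

theorem PropR.propA (hR : PropR M) (hV : PropV M) : PropA M := by
  rw [propA_iff]
  intro i j
  let T : Fin n × Fin n → ℝ := fun p => M p.1 p.2 + M p.1.rev p.2.rev
  have hrow : ∀ i j l, T (i, j) = T (i, l) := fun i j l => by
    linarith [hV.1 i j i.rev l, hR.1 i.rev j l]
  have hcol : ∀ i k l, T (i, l) = T (k, l) := fun i k l => by
    linarith [hV.1 i l k l.rev, hR.2 i l.rev k]
  have hT : ∀ p q, T p = T q := fun ⟨i, j⟩ ⟨k, l⟩ => (hrow i j l).trans (hcol i k l)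
  have hsum : ∑ p, T p = 0 := by
    simp only [T, Fintype.sum_prod_type, sum_add_distrib, sum_sum_apply_rev_rev, hV.2, add_zero]
  linarith [Fintype.eq_zero_of_forall_eq_of_sum_eq_zero hT hsum (i, j)]

theorem propR_and_propV_iff : PropR M ∧ PropV M ↔ PropA M ∧ PropV M :=
  ⟨fun ⟨hR, hV⟩ => ⟨hR.propA hV, hV⟩, fun ⟨hA, hV⟩ => ⟨hA.propR hV, hV⟩⟩

theorem PropV.apply_eq_of_sum_eq (hV : PropV M) {a b : Fin n}
    (hab : ∑ j, M a j = ∑ j, M b j) (l : Fin n) : M a l = M b l := by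
  have hconst : ∀ j k, M a j - M b j = M a k - M b k := fun j k => by linarith [hV.1 a j b k]
  have hsum : ∑ j, (M a j - M b j) = 0 := by rw [sum_sub_distrib, hab, sub_self]
  exact sub_eq_zero.1 (Fintype.eq_zero_of_forall_eq_of_sum_eq_zero hconst hsum l)

theorem PropV.eq_zero_of_propS (hV : PropV M) (hS : PropS M) : M = 0 := by
  obtain ⟨w, hrow, hcol⟩ := hS
  have hconst : ∀ p q : Fin n × Fin n, M p.1 p.2 = M q.1 q.2 := fun ⟨a, l⟩ ⟨b, m⟩ =>
    calc M a l = M b l := hV.apply_eq_of_sum_eq (by rw [hrow, hrow]) l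
      _ = M b m := hV.transpose.apply_eq_of_sum_eq (by simp [hcol]) b
  have hsum : ∑ p : Fin n × Fin n, M p.1 p.2 = 0 := by rw [Fintype.sum_prod_type]; exact hV.2
  ext i j
  exact Fintype.eq_zero_of_forall_eq_of_sum_eq_zero hconst hsum (i, j)

def addRowCol (r c : Fin n → ℝ) : Matrix (Fin n) (Fin n) ℝ := fun i j => r i + c j

theorem propA_addRowCol {r c : Fin n → ℝ} (hr : ∀ i, r i.rev = -r i) (hc : ∀ j, c j.rev = -c j) :
    PropA (addRowCol r c) :=
  propA_iff.2 fun i j => by simp only [addRowCol, hr, hc, neg_add]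

theorem propV_addRowCol {r c : Fin n → ℝ} (hr : ∀ i, r i.rev = -r i) (hc : ∀ j, c j.rev = -c j) :
    PropV (addRowCol r c) := by
  refine ⟨fun i j k l => by simp only [addRowCol]; ring, ?_⟩
  simp [addRowCol, sum_add_distrib, ← mul_sum, Fin.sum_eq_zero_of_apply_rev hr,
    Fin.sum_eq_zero_of_apply_rev hc]

noncomputable def rowMean (M : Matrix (Fin n) (Fin n) ℝ) (i : Fin n) : ℝ := (∑ j, M i j) / n

theorem PropA.rowMean_rev (hA : PropA M) (i : Fin n) : rowMean M i.rev = -rowMean M i := by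
  rw [rowMean, rowMean, hA.sum_apply_rev, neg_div]

theorem natCast_mul_rowMean (M : Matrix (Fin n) (Fin n) ℝ) (i : Fin n) : n * rowMean M i = ∑ j, M i j :=
  mul_div_cancel₀ _ (Nat.cast_ne_zero.2 (Fin.pos i).ne')

noncomputable def meanPart (M : Matrix (Fin n) (Fin n) ℝ) : Matrix (Fin n) (Fin n) ℝ :=
  addRowCol (rowMean M) (rowMean Mᵀ)

theorem PropA.propA_meanPart (hA : PropA M) : PropA (meanPart M) :=
  propA_addRowCol hA.rowMean_rev hA.transpose.rowMean_rev

theorem PropA.propV_meanPart (hA : PropA M) : PropV (meanPart M) :=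
  propV_addRowCol hA.rowMean_rev hA.transpose.rowMean_rev

theorem PropA.propS_sub_meanPart (hA : PropA M) : PropS (M - meanPart M) := by
  have hr := Fin.sum_eq_zero_of_apply_rev hA.rowMean_rev
  have hc := Fin.sum_eq_zero_of_apply_rev hA.transpose.rowMean_rev
  refine ⟨0, fun i => ?_, fun j => ?_⟩
  · simp [meanPart, addRowCol, sum_sub_distrib, sum_add_distrib, hc, natCast_mul_rowMean]
  · simp [meanPart, addRowCol, sum_sub_distrib, sum_add_distrib, hr]
    exact sub_eq_zero.2 (natCast_mul_rowMean Mᵀ j).symm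

end Matrix

theorem stmt_19 (n : ℕ) :
    (∀ M : Matrix (Fin n) (Fin n) ℝ, (PropR M ∧ PropV M) ↔ (PropA M ∧ PropV M)) ∧
    (∀ M : Matrix (Fin n) (Fin n) ℝ, (PropR M ∧ PropV M) → (PropA M ∧ PropS M) → M = 0) ∧
    (∀ M : Matrix (Fin n) (Fin n) ℝ, PropA M →
      ∃ X Y : Matrix (Fin n) (Fin n) ℝ,
        (PropR X ∧ PropV X) ∧ (PropA Y ∧ PropS Y) ∧ M = X + Y) := by
  refine ⟨fun M => propR_and_propV_iff, fun M ⟨_, hV⟩ ⟨_, hS⟩ => hV.eq_zero_of_propS hS,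
    fun M hA => ⟨meanPart M, M - meanPart M, ?_, ?_, (add_sub_cancel _ _).symm⟩⟩
  · exact propR_and_propV_iff.2 ⟨hA.propA_meanPart, hA.propV_meanPart⟩
  · exact ⟨hA.sub hA.propA_meanPart, hA.propS_sub_meanPart⟩
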